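/- arXiv:2302.04357 — 2 statements merged into one kernel-verified Lean document; each statement's English description precedes it below -/
import Mathlib

section
/- Let H be a hypothesis class with Ldim(H) = d < ∞ and let (S, x_{T+1}) be an optimally significant input for H (i.e., all optimal online learners for H agree at (S,x_{T+1})). Then there exists m ∈ ℕ such that every optimal online learner makes exactly m mistakes on S, and Ldim(H_S) = d − m. -/
open Classical

variable {X : Type*}

/-- A hypothesis `h` is consistent with a sample `S`. -/
def Consistent (h : X → Bool) (S : List (X × Bool)) : Prop :=
  ∀ p ∈ S, h p.1 = p.2

/-- A sample is realizable by the class `H`. -/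
def Realizable (H : Set (X → Bool)) (S : List (X × Bool)) : Prop :=
  ∃ h ∈ H, Consistent h S

/-- The version space `H_S`. -/
def VS (H : Set (X → Bool)) (S : List (X × Bool)) : Set (X → Bool) :=
  {h ∈ H | Consistent h S}

/-- `H^{(x,r)}`. -/
def Restrict (H : Set (X → Bool)) (x : X) (r : Bool) : Set (X → Bool) :=
  {h ∈ H | h x = r}

/-- `Shatters H d` holds iff there is a complete binary tree of depth `d` shattered by `H`,
equivalently stated recursively. -/
def Shatters (H : Set (X → Bool)) : ℕ → Prop
  | 0 => H.Nonempty
  | d + 1 => ∃ x : X, Shatters (Restrict H x false) d ∧ Shatters (Restrict H x true) d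

/-- Littlestone dimension, with `Ldim ∅ = ⊥` (playing the role of `-1`). -/
noncomputable def Ldim (H : Set (X → Bool)) : WithBot ℕ∞ :=
  ⨆ d ∈ {d : ℕ | Shatters H d}, ((d : ℕ∞) : WithBot ℕ∞)

def MistakesFrom (A : List (X × Bool) → X → Bool) :
    List (X × Bool) → List (X × Bool) → ℕ
  | _, [] => 0
  | pre, p :: rest =>
      (if A pre p.1 ≠ p.2 then 1 else 0) + MistakesFrom A (pre ++ [p]) rest

/-- Number of mistakes that the online learner `A` makes on the sample `S`. -/
def Mistakes (A : List (X × Bool) → X → Bool) (S : List (X × Bool)) : ℕ :=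
  MistakesFrom A [] S

/-- Mistake bound of `A` with respect to `H`. -/
noncomputable def MB (A : List (X × Bool) → X → Bool) (H : Set (X → Bool)) : ℕ∞ :=
  ⨆ S ∈ {S | Realizable H S}, (Mistakes A S : ℕ∞)

/-- `A` is an optimal online learner for `H`. -/
def IsOptimal (A : List (X × Bool) → X → Bool) (H : Set (X → Bool)) : Prop :=
  MB A H = ⨅ B : List (X × Bool) → X → Bool, MB B H

/-- Post-`S` mistake bound of `A` w.r.t. `H`. -/
noncomputable def PostMB (A : List (X × Bool) → X → Bool) (H : Set (X → Bool))
    (S : List (X × Bool)) : ℕ∞ :=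
  ⨆ S' ∈ {S' | Realizable H (S ++ S')}, ((Mistakes A (S ++ S') - Mistakes A S : ℕ) : ℕ∞)

/-- Optimal post-`S` mistake bound. -/
noncomputable def OptPostMB (H : Set (X → Bool)) (S : List (X × Bool)) : ℕ∞ :=
  ⨅ A : List (X × Bool) → X → Bool, PostMB A H S

/-- `A` is anytime optimal for `H`. -/
def AnytimeOptimal (A : List (X × Bool) → X → Bool) (H : Set (X → Bool)) : Prop :=
  ∀ S, Realizable H S → PostMB A H S = OptPostMB H S

/-- `(S,x)` is an optimally significant input for `H`. -/
def OptSignificant {X : Type*} (H : Set (X → Bool)) (S : List (X × Bool)) (x : X) : Prop :=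
  Realizable H S ∧
    ∀ A A' : List (X × Bool) → X → Bool,
      IsOptimal A H → IsOptimal A' H → A S x = A' S x


/-!
An online learner is optimal for `H` exactly when its mistake bound is `d = Ldim H`: the
standard optimal algorithm (SOA), which predicts the label whose restriction of the version space
has the larger Littlestone dimension, attains `d`, while an adversary walking down a shattered
tree forces `d` mistakes on any learner.

Let `A` be optimal, `m` its number of mistakes on `S` and `k = Ldim H_S`. Walking down a shattered
tree of `H_S` after `S` forces `k` further mistakes, so `m + k ≤ d`. If `m + k < d`, follow `A`
on `S`, predict an arbitrary label at `(S, x)` and continue with the SOA: this costs at most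
`m + 1 + k ≤ d` mistakes, so both choices of the label give optimal learners, and they disagree
at `(S, x)`. Hence `m = d - k` for every optimal learner.
-/

abbrev Learner (X : Type*) := List (X × Bool) → X → Bool

variable {H G G' : Set (X → Bool)}

lemma restrict_subset (G : Set (X → Bool)) (x : X) (r : Bool) : Restrict G x r ⊆ G :=
  fun _ hf => hf.1

lemma restrict_mono (h : G ⊆ G') (x : X) (r : Bool) : Restrict G x r ⊆ Restrict G' x r :=
  fun _ hf => ⟨h hf.1, hf.2⟩

lemma shatters_mono (h : G ⊆ G') {n : ℕ} (hn : Shatters G n) : Shatters G' n := by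
  induction n generalizing G G' with
  | zero => exact hn.mono h
  | succ n ih =>
    obtain ⟨x, h₀, h₁⟩ := hn
    exact ⟨x, ih (restrict_mono h x false) h₀, ih (restrict_mono h x true) h₁⟩

lemma shatters_succ_iff {n : ℕ} :
    Shatters G (n + 1) ↔ ∃ x, ∀ r, Shatters (Restrict G x r) n := by
  simp only [Shatters, Bool.forall_bool]

lemma Shatters.of_le {m n : ℕ} (h : Shatters G n) (hmn : m ≤ n) : Shatters G m := by
  induction n with
  | zero => rwa [Nat.le_zero.mp hmn]
  | succ n ih =>
    rcases hmn.eq_or_lt with rfl | hlt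
    · exact h
    · obtain ⟨x, hx⟩ := shatters_succ_iff.mp h
      exact ih (shatters_mono (restrict_subset G x false) (hx false)) (Nat.lt_succ_iff.mp hlt)

lemma coe_le_ldim {n : ℕ} (h : Shatters G n) : ((n : ℕ∞) : WithBot ℕ∞) ≤ Ldim G :=
  le_iSup₂ (f := fun (n : ℕ) (_ : n ∈ {n | Shatters G n}) => ((n : ℕ∞) : WithBot ℕ∞)) n h

lemma ldim_le_coe_iff {n : ℕ} : Ldim G ≤ ((n : ℕ∞) : WithBot ℕ∞) ↔ ¬Shatters G (n + 1) := by
  refine ⟨fun hle hn => ?_, fun hn => iSup₂_le fun m hm => ?_⟩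
  · have := (coe_le_ldim hn).trans hle
    norm_cast at this
    omega
  · have : m ≤ n := by
      by_contra hmn
      exact hn (hm.of_le (by omega))
    exact_mod_cast this

lemma shatters_iff_coe_le_ldim {n : ℕ} : Shatters G n ↔ ((n : ℕ∞) : WithBot ℕ∞) ≤ Ldim G := by
  refine ⟨coe_le_ldim, fun hle => ?_⟩
  by_contra hn
  cases n with
  | zero =>
    have : Ldim G ≤ ⊥ := iSup₂_le fun m hm => (hn (hm.of_le m.zero_le)).elim
    exact WithBot.bot_lt_coe _ |>.not_ge (hle.trans this)
  | succ n =>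
    have := hle.trans (ldim_le_coe_iff.mpr hn)
    norm_cast at this
    omega

lemma ldim_eq_coe_iff {k : ℕ} :
    Ldim G = ((k : ℕ∞) : WithBot ℕ∞) ↔ Shatters G k ∧ ¬Shatters G (k + 1) := by
  rw [le_antisymm_iff, ldim_le_coe_iff, ← shatters_iff_coe_le_ldim, and_comm]

lemma exists_ldim_eq_coe {n : ℕ} (hne : G.Nonempty) (hn : ¬Shatters G (n + 1)) :
    ∃ k ≤ n, Ldim G = ((k : ℕ∞) : WithBot ℕ∞) := by
  have hex : ∃ m, ¬Shatters G m := ⟨n + 1, hn⟩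
  obtain ⟨k, hk⟩ : ∃ k, Nat.find hex = k + 1 :=
    Nat.exists_eq_add_one.mpr (Nat.pos_of_ne_zero fun h0 => Nat.find_spec hex (h0 ▸ hne))
  have hkn : k ≤ n := by have := Nat.find_min' hex hn; omega
  have hsh : Shatters G k := not_not.mp (Nat.find_min hex (by omega))
  exact ⟨k, hkn, ldim_eq_coe_iff.mpr ⟨hsh, hk ▸ Nat.find_spec hex⟩⟩

lemma realizable_iff_nonempty {S : List (X × Bool)} : Realizable H S ↔ (VS H S).Nonempty :=
  Iff.rfl

lemma VS_subset (S : List (X × Bool)) : VS H S ⊆ H := fun _ hf => hf.1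

lemma VS_append_subset (S T : List (X × Bool)) : VS H (S ++ T) ⊆ VS H S :=
  fun _ hf => ⟨hf.1, fun p hp => hf.2 p (List.mem_append_left T hp)⟩

lemma VS_append_singleton (S : List (X × Bool)) (p : X × Bool) :
    VS H (S ++ [p]) = Restrict (VS H S) p.1 p.2 := by
  ext h
  simp [VS, Restrict, Consistent, or_imp, forall_and, and_assoc]

lemma Realizable.append_left {S T : List (X × Bool)} (h : Realizable H (S ++ T)) :
    Realizable H S :=
  realizable_iff_nonempty.mpr ((realizable_iff_nonempty.mp h).mono (VS_append_subset S T))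

lemma mistakesFrom_append (A : Learner X) (pre l₁ l₂ : List (X × Bool)) :
    MistakesFrom A pre (l₁ ++ l₂) = MistakesFrom A pre l₁ + MistakesFrom A (pre ++ l₁) l₂ := by
  induction l₁ generalizing pre with
  | nil => simp [MistakesFrom]
  | cons p rest ih =>
    rw [List.cons_append]
    simp only [MistakesFrom]
    rw [ih (pre ++ [p]), List.append_assoc, List.singleton_append]
    omega

lemma mistakes_append (A : Learner X) (S T : List (X × Bool)) :
    Mistakes A (S ++ T) = Mistakes A S + MistakesFrom A S T := by
  rw [Mistakes, mistakesFrom_append, List.nil_append, Mistakes]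

lemma mistakesFrom_congr {A B : Learner X} {pre l : List (X × Bool)}
    (h : ∀ t, t <+: l → t ≠ l → A (pre ++ t) = B (pre ++ t)) :
    MistakesFrom A pre l = MistakesFrom B pre l := by
  induction l generalizing pre with
  | nil => rfl
  | cons p rest ih =>
    have hpre : A pre = B pre := by simpa using h [] List.nil_prefix (List.cons_ne_nil p rest).symm
    have hrest := ih (pre := pre ++ [p]) fun t ht hne => by
      simpa using h (p :: t) (List.cons_prefix_cons.mpr ⟨rfl, ht⟩) (by simpa using hne)
    simp only [MistakesFrom, hpre, hrest]

lemma mistakesFrom_update_le (L : Learner X) (S : List (X × Bool)) (f : X → Bool)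
    (T : List (X × Bool)) : MistakesFrom (Function.update L S f) S T ≤ MistakesFrom L S T + 1 := by
  cases T with
  | nil => simp [MistakesFrom]
  | cons p rest =>
    have hrest : MistakesFrom (Function.update L S f) (S ++ [p]) rest
        = MistakesFrom L (S ++ [p]) rest :=
      mistakesFrom_congr fun t _ _ => Function.update_of_ne (by simp) f L
    simp only [MistakesFrom, hrest]
    split_ifs <;> omega

noncomputable def soa (H : Set (X → Bool)) : Learner X := fun pre x =>
  decide (Ldim (Restrict (VS H pre) x false) ≤ Ldim (Restrict (VS H pre) x true))

lemma ldim_restrict_le_of_soa_ne {pre : List (X × Bool)} {x : X} {y : Bool}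
    (h : soa H pre x ≠ y) :
    Ldim (Restrict (VS H pre) x y) ≤ Ldim (Restrict (VS H pre) x !y) := by
  cases y <;> simp [soa] at h ⊢
  · exact h
  · exact h.le

lemma shatters_succ_of_soa_ne {pre : List (X × Bool)} {x : X} {y : Bool} {n : ℕ}
    (h : soa H pre x ≠ y) (hn : Shatters (Restrict (VS H pre) x y) n) :
    Shatters (VS H pre) (n + 1) := by
  have hn' : Shatters (Restrict (VS H pre) x !y) n :=
    shatters_iff_coe_le_ldim.mpr ((coe_le_ldim hn).trans (ldim_restrict_le_of_soa_ne h))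
  cases y
  · exact ⟨x, hn, hn'⟩
  · exact ⟨x, hn', hn⟩

lemma mistakesFrom_soa_le {pre l : List (X × Bool)} {n : ℕ}
    (hn : ¬Shatters (VS H pre) (n + 1)) (hl : Realizable H (pre ++ l)) :
    MistakesFrom (soa H) pre l ≤ n := by
  induction l generalizing pre n with
  | nil => simp [MistakesFrom]
  | cons p rest ih =>
    rw [← List.singleton_append, ← List.append_assoc] at hl
    have hVS := VS_append_singleton (H := H) pre p
    have hn' : ¬Shatters (VS H (pre ++ [p])) (n + 1) :=
      fun h => hn (shatters_mono (VS_append_subset pre [p]) h)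
    simp only [MistakesFrom]
    by_cases hmis : soa H pre p.1 = p.2
    · simpa [hmis] using ih hn' hl
    obtain ⟨n, rfl⟩ : ∃ n', n = n' + 1 := by
      refine Nat.exists_eq_add_one.mpr (Nat.pos_of_ne_zero fun h0 => hn ?_)
      subst h0
      exact shatters_succ_of_soa_ne hmis (hVS ▸ hl.append_left)
    have hdrop : ¬Shatters (VS H (pre ++ [p])) (n + 1) :=
      fun h => hn (shatters_succ_of_soa_ne hmis (hVS ▸ h))
    have := ih hdrop hl
    simp only [hmis, ne_eq, not_false_eq_true, if_true]
    omega

lemma exists_le_mistakesFrom (A : Learner X) {k : ℕ} {pre : List (X × Bool)}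
    (hk : Shatters (VS H pre) k) :
    ∃ l, Realizable H (pre ++ l) ∧ k ≤ MistakesFrom A pre l := by
  induction k generalizing pre with
  | zero => exact ⟨[], by rwa [List.append_nil], Nat.zero_le _⟩
  | succ k ih =>
    obtain ⟨x, hx⟩ := shatters_succ_iff.mp hk
    let p : X × Bool := (x, !A pre x)
    obtain ⟨l, hl, hkl⟩ := ih (pre := pre ++ [p]) (VS_append_singleton pre p ▸ hx _)
    refine ⟨p :: l, by simpa using hl, ?_⟩
    have hmis : A pre p.1 ≠ p.2 := by simp [p]
    simp only [MistakesFrom, if_pos hmis]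
    omega

lemma mistakes_le_MB {A : Learner X} {S : List (X × Bool)} (hS : Realizable H S) :
    (Mistakes A S : ℕ∞) ≤ MB A H :=
  le_iSup₂ (f := fun (S : List (X × Bool)) (_ : S ∈ {S | Realizable H S}) =>
    (Mistakes A S : ℕ∞)) S hS

lemma MB_le_iff {A : Learner X} {c : ℕ∞} :
    MB A H ≤ c ↔ ∀ S, Realizable H S → (Mistakes A S : ℕ∞) ≤ c :=
  iSup₂_le_iff

lemma coe_le_MB {n : ℕ} (hn : Shatters H n) (A : Learner X) : (n : ℕ∞) ≤ MB A H := by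
  obtain ⟨l, hl, hnl⟩ := exists_le_mistakesFrom A (pre := []) (by simpa [VS, Consistent] using hn)
  exact (Nat.cast_le.mpr hnl).trans (mistakes_le_MB (by simpa using hl))

lemma MB_soa_le {n : ℕ} (hn : ¬Shatters H (n + 1)) : MB (soa H) H ≤ n :=
  MB_le_iff.mpr fun S hS => Nat.cast_le.mpr <|
    mistakesFrom_soa_le (pre := []) (by simpa [VS, Consistent] using hn) (by simpa using hS)

lemma isOptimal_iff {d : ℕ} (hd : Ldim H = ((d : ℕ∞) : WithBot ℕ∞)) {A : Learner X} :
    IsOptimal A H ↔ MB A H = d := by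
  obtain ⟨hsh, hnsh⟩ := ldim_eq_coe_iff.mp hd
  rw [IsOptimal, le_antisymm ((iInf_le _ (soa H)).trans (MB_soa_le hnsh)) (le_iInf (coe_le_MB hsh))]

lemma IsOptimal.mistakes_le {d : ℕ} (hd : Ldim H = ((d : ℕ∞) : WithBot ℕ∞)) {A : Learner X}
    (hA : IsOptimal A H) {T : List (X × Bool)} (hT : Realizable H T) : Mistakes A T ≤ d :=
  Nat.cast_le.mp ((isOptimal_iff hd).mp hA ▸ mistakes_le_MB hT)

lemma isOptimal_of_mistakes_le {d : ℕ} (hd : Ldim H = ((d : ℕ∞) : WithBot ℕ∞)) {A : Learner X}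
    (hA : ∀ T, Realizable H T → Mistakes A T ≤ d) : IsOptimal A H :=
  (isOptimal_iff hd).mpr <| le_antisymm (MB_le_iff.mpr fun T hT => Nat.cast_le.mpr (hA T hT))
    (coe_le_MB (ldim_eq_coe_iff.mp hd).1 A)

section Splice

noncomputable def splice (S : List (X × Bool)) (A C : Learner X) : Learner X :=
  fun pre => if S <+: pre then C pre else A pre

variable {S : List (X × Bool)} {A C : Learner X}

lemma mistakes_splice_append (T : List (X × Bool)) :
    Mistakes (splice S A C) (S ++ T) = Mistakes A S + MistakesFrom C S T := by
  rw [mistakes_append]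
  congr 1
  · refine mistakesFrom_congr fun t ht hne => ?_
    have : ¬S <+: t := fun hSt => hne (ht.eq_of_length (le_antisymm ht.length_le hSt.length_le))
    simp [splice, this]
  · exact mistakesFrom_congr fun t _ _ => if_pos (List.prefix_append S t)

lemma mistakes_splice_of_not_prefix {T : List (X × Bool)} (h : ¬S <+: T) :
    Mistakes (splice S A C) T = Mistakes A T :=
  mistakesFrom_congr fun t ht _ => if_neg fun hSt => h (hSt.trans (by simpa using ht))

end Splice

section Significance

variable {d k : ℕ} {S : List (X × Bool)} {A : Learner X}

lemma IsOptimal.mistakes_add_le (hd : Ldim H = ((d : ℕ∞) : WithBot ℕ∞)) (hA : IsOptimal A H)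
    (hk : Shatters (VS H S) k) : Mistakes A S + k ≤ d := by
  obtain ⟨l, hl, hkl⟩ := exists_le_mistakesFrom A hk
  have := hA.mistakes_le hd hl
  rw [mistakes_append] at this
  omega

lemma IsOptimal.exists_isOptimal_apply_eq (hd : Ldim H = ((d : ℕ∞) : WithBot ℕ∞))
    (hA : IsOptimal A H) (hk : ¬Shatters (VS H S) (k + 1)) (hlt : Mistakes A S + k < d)
    (x : X) (b : Bool) : ∃ B : Learner X, IsOptimal B H ∧ B S x = b := by
  let C := Function.update (soa H) S (Function.update (soa H S) x b)
  refine ⟨splice S A C, isOptimal_of_mistakes_le hd fun T hT => ?_, by simp [splice, C]⟩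
  by_cases hST : S <+: T
  · obtain ⟨T', rfl⟩ := hST
    have : MistakesFrom C S T' ≤ k + 1 := (mistakesFrom_update_le (soa H) S _ T').trans
      (Nat.add_le_add_right (mistakesFrom_soa_le hk hT) 1)
    rw [mistakes_splice_append]
    omega
  · rw [mistakes_splice_of_not_prefix hST]
    exact hA.mistakes_le hd hT

lemma mistakes_add_eq_of_optSignificant (hd : Ldim H = ((d : ℕ∞) : WithBot ℕ∞)) {x : X}
    (hsig : OptSignificant H S x) (hk : Ldim (VS H S) = ((k : ℕ∞) : WithBot ℕ∞))
    (hA : IsOptimal A H) : Mistakes A S + k = d := by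
  obtain ⟨hsh, hnsh⟩ := ldim_eq_coe_iff.mp hk
  refine le_antisymm (hA.mistakes_add_le hd hsh) (not_lt.mp fun hlt => ?_)
  obtain ⟨B₀, hB₀, h₀⟩ := hA.exists_isOptimal_apply_eq hd hnsh hlt x false
  obtain ⟨B₁, hB₁, h₁⟩ := hA.exists_isOptimal_apply_eq hd hnsh hlt x true
  exact Bool.false_ne_true (h₀ ▸ h₁ ▸ hsig.2 B₀ B₁ hB₀ hB₁)

end Significance

/-- if `Ldim H = d < ∞` and `(S,x)` is optimally significant, then there is
`m` such that every optimal learner makes exactly `m` mistakes on `S`, and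
`Ldim(H_S) = d - m`. -/
theorem stmt9 {X : Type*} (H : Set (X → Bool)) (d : ℕ)
    (hd : Ldim H = ((d : ℕ∞) : WithBot ℕ∞))
    (S : List (X × Bool)) (x : X) (hsig : OptSignificant H S x) :
    ∃ m : ℕ, (∀ A : List (X × Bool) → X → Bool, IsOptimal A H → Mistakes A S = m) ∧
      Ldim (VS H S) = (((d - m : ℕ) : ℕ∞) : WithBot ℕ∞) := by
  have hbounded : ¬Shatters (VS H S) (d + 1) :=
    fun h => (ldim_eq_coe_iff.mp hd).2 (shatters_mono (VS_subset S) h)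
  obtain ⟨k, hkd, hk⟩ := exists_ldim_eq_coe (realizable_iff_nonempty.mp hsig.1) hbounded
  refine ⟨d - k, fun A hA => ?_, by rwa [Nat.sub_sub_self hkd]⟩
  have := mistakes_add_eq_of_optSignificant hd hsig hk hA
  omega
end

section
/- Define H_init = {h_s}_{s∈ℕ} over ℕ by h_s(x) = 1 if φ_x halts on input x within s steps and 0 otherwise. Then Ldim(H_init) = ∞; i.e., for every n ∈ ℕ, Ldim(H_init) ≥ n. -/
open Classical

variable {X : Type*}

/-- The `e`-th partial computable function in the standard numbering by codes. -/
def phi (e : ℕ) : ℕ →. ℕ :=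
  (Denumerable.ofNat Nat.Partrec.Code e).eval

/-- `φ_e(x)↓`. -/
def phiHalts (e x : ℕ) : Prop := (phi e x).Dom

/-- The {0,1}-valued learner induced by a two-place partial computable function:
it predicts `true` exactly when the output converges to `1`. -/
noncomputable def predOf (A : ℕ → ℕ →. ℕ) : List (ℕ × Bool) → ℕ → Bool :=
  fun S x => if 1 ∈ A (Encodable.encode S) x then true else false

/-- `A` is a computable online learner for `H`: a two-place partial computable function
converging with value in {0,1} on every (encoded `H`-realizable sample, point) pair. -/
def IsCOnlineLearner (A : ℕ → ℕ →. ℕ) (H : Set (ℕ → Bool)) : Prop :=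
  Partrec₂ A ∧
    ∀ S : List (ℕ × Bool), Realizable H S → ∀ x : ℕ,
      ∃ y ∈ A (Encodable.encode S) x, y = 0 ∨ y = 1

/-- The class `H_init = {h_s}`, where `h_s x = 1` iff `φ_x(x)` halts within `s` steps. -/
def Hinit : Set (ℕ → Bool) :=
  {h | ∃ s : ℕ, h = fun x =>
    (Nat.Partrec.Code.evaln s (Denumerable.ofNat Nat.Partrec.Code x) x).isSome}

/-!
In a pointwise monotone family `h : ℕ → X → Bool`, a point rejected by `h s` but accepted by
some later `h t` separates `h s` from `h t`. If such points exist beyond every `s`, iterating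
`s ↦ t` gives points `p j` and members `g i` of the family with `g i (p j) = true ↔ j ≤ i`, and
`2 ^ d` such thresholds shatter a tree of depth `d` by bisection. The step-bounded diagonal
halting family qualifies: for each `s`, the program `e` computing
`x ↦ if φ_x(x) halts within s steps then ↑ else 0` cannot halt on `e` within `s` steps, so it
outputs `0` there, after more than `s` steps.
-/

theorem Shatters.mono {H H' : Set (X → Bool)} (hHH' : H ⊆ H') {d : ℕ} (hH : Shatters H d) :
    Shatters H' d := by
  induction d generalizing H H' with
  | zero => exact Set.Nonempty.mono hHH' hH
  | succ d ih =>
    obtain ⟨x, hfalse, htrue⟩ := hH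
    exact ⟨x, ih (fun h hh => ⟨hHH' hh.1, hh.2⟩) hfalse, ih (fun h hh => ⟨hHH' hh.1, hh.2⟩) htrue⟩

theorem shatters_image_Ico_of_threshold (g : ℕ → X → Bool) (p : ℕ → X)
    (hgp : ∀ i j, g i (p j) = true ↔ j ≤ i) (d lo : ℕ) :
    Shatters (g '' Set.Ico lo (lo + 2 ^ d)) d := by
  induction d generalizing lo with
  | zero => exact ⟨g lo, lo, by simp, rfl⟩
  | succ d ih =>
    refine ⟨p (lo + 2 ^ d), (ih lo).mono ?_, (ih (lo + 2 ^ d)).mono ?_⟩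
    · rintro _ ⟨i, ⟨hlo, hi⟩, rfl⟩
      refine ⟨⟨i, ⟨hlo, by rw [pow_succ]; omega⟩, rfl⟩, ?_⟩
      rw [← Bool.not_eq_true, hgp]
      omega
    · rintro _ ⟨i, ⟨hlo, hi⟩, rfl⟩
      exact ⟨⟨i, ⟨by omega, by rw [pow_succ]; omega⟩, rfl⟩, (hgp i _).2 hlo⟩

theorem shatters_range_of_threshold (g : ℕ → X → Bool) (p : ℕ → X)
    (hgp : ∀ i j, g i (p j) = true ↔ j ≤ i) (d : ℕ) : Shatters (Set.range g) d :=
  (shatters_image_Ico_of_threshold g p hgp d 0).mono (Set.image_subset_range _ _)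

theorem shatters_range_of_monotone {h : ℕ → X → Bool} (hmono : Monotone h)
    (hsep : ∀ s, ∃ x, h s x = false ∧ ∃ t, h t x = true) (d : ℕ) :
    Shatters (Set.range h) d := by
  choose x hx t ht using hsep
  have up : ∀ {s s' y}, s ≤ s' → h s y = true → h s' y = true := fun {_ _ y} hss' hy =>
    Bool.le_iff_imp.1 (hmono hss' y) hy
  have s_lt_t : ∀ s, s < t s := fun s => by
    by_contra! hts
    simpa [hx s] using up hts (ht s)
  let σ : ℕ → ℕ := fun i => t^[i] 0
  have hσ : ∀ i, σ (i + 1) = t (σ i) := fun i => Function.iterate_succ_apply' t i 0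
  have σ_mono : Monotone σ := monotone_nat_of_le_succ fun i => (hσ i ▸ s_lt_t (σ i)).le
  refine (shatters_range_of_threshold (fun i => h (σ (i + 1))) (fun j => x (σ j)) ?_ d).mono
    (Set.range_comp_subset_range _ h)
  intro i j
  constructor
  · intro hij
    by_contra! hji
    have := up (σ_mono (Nat.succ_le_of_lt hji)) hij
    simp [hx] at this
  · intro hji
    exact up (σ_mono (Nat.succ_le_succ hji)) (hσ j ▸ ht (σ j))

theorem le_ldim_of_shatters {H : Set (X → Bool)} {d : ℕ} (hH : Shatters H d) :
    ((d : ℕ∞) : WithBot ℕ∞) ≤ Ldim H :=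
  le_biSup (fun d : ℕ => ((d : ℕ∞) : WithBot ℕ∞)) hH

theorem ldim_eq_top_of_forall_shatters {H : Set (X → Bool)} (hH : ∀ d, Shatters H d) :
    Ldim H = ⊤ := by
  have hle : ∀ d : ℕ, ((d : ℕ∞) : WithBot ℕ∞) ≤ Ldim H := fun d => le_ldim_of_shatters (hH d)
  cases hL : Ldim H with
  | bot => simpa [hL] using hle 0
  | coe e =>
    have : ⊤ ≤ e := ENat.forall_natCast_le_iff_le.1 fun d _ => WithBot.coe_le_coe.1 (hL ▸ hle d)
    rw [top_le_iff.1 this]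
    rfl

section HaltsWithin

open Nat.Partrec Code

def haltsWithin (s x : ℕ) : Bool :=
  (evaln s (Denumerable.ofNat Code x) x).isSome

theorem range_haltsWithin_subset : Set.range haltsWithin ⊆ Hinit := by
  rintro _ ⟨s, rfl⟩
  exact ⟨s, rfl⟩

theorem monotone_haltsWithin : Monotone haltsWithin := fun _ _ hst _ =>
  Bool.le_iff_imp.2 fun hx =>
    let ⟨a, ha⟩ := Option.isSome_iff_exists.1 hx
    Option.isSome_iff_exists.2 ⟨a, evaln_mono hst ha⟩

theorem computable_haltsWithin (s : ℕ) : Computable (haltsWithin s) :=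
  (Primrec.option_isSome.comp (primrec_evaln.comp
    (((Primrec.const s).pair (Primrec.ofNat Code)).pair Primrec.id))).to_comp

theorem phi_self_dom_iff (x : ℕ) : (phi x x).Dom ↔ ∃ s, haltsWithin s x = true := by
  simp only [phi, haltsWithin, Part.dom_iff_mem, evaln_complete, Option.isSome_iff_exists]
  exact ⟨fun ⟨a, s, ha⟩ => ⟨s, a, ha⟩, fun ⟨s, a, ha⟩ => ⟨a, s, ha⟩⟩

theorem exists_phi_self_dom_not_haltsWithin (s : ℕ) :
    ∃ x, (phi x x).Dom ∧ haltsWithin s x = false := by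
  let f : ℕ →. ℕ := fun x => cond (haltsWithin s x) Part.none (Part.some 0)
  have hf : Partrec f :=
    Partrec.cond (computable_haltsWithin s) Partrec.none (Computable.const 0).partrec
  obtain ⟨c, hc⟩ := exists_code.1 (Partrec.nat_iff.1 hf)
  have hphi : phi (Encodable.encode c) = f := by simp [phi, hc]
  have hslow : haltsWithin s (Encodable.encode c) = false := by
    by_contra! hfast
    have hdom := (phi_self_dom_iff _).2 ⟨s, by simpa using hfast⟩
    simp [hphi, f, hfast] at hdom
  exact ⟨Encodable.encode c, by simp [hphi, f, hslow], hslow⟩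

end HaltsWithin

/-- `Ldim(H_init) = ∞`, i.e. `Ldim(H_init) ≥ n` for every `n`. -/
theorem stmt16 :
    Ldim Hinit = ⊤ ∧ ∀ n : ℕ, ((n : ℕ∞) : WithBot ℕ∞) ≤ Ldim Hinit := by
  have hsep (s : ℕ) : ∃ x, haltsWithin s x = false ∧ ∃ t, haltsWithin t x = true := by
    obtain ⟨x, hdom, hslow⟩ := exists_phi_self_dom_not_haltsWithin s
    exact ⟨x, hslow, (phi_self_dom_iff x).1 hdom⟩
  have hshatters (d : ℕ) : Shatters Hinit d :=
    (shatters_range_of_monotone monotone_haltsWithin hsep d).mono range_haltsWithin_subset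
  exact ⟨ldim_eq_top_of_forall_shatters hshatters, fun n => le_ldim_of_shatters (hshatters n)⟩
end
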